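/- arXiv:2209.09049 — 2 statements merged into one kernel-verified Lean document; each statement's English description precedes it below -/
import Mathlib

section
/- For every graph G in the support of D_r^{apx}, the maximum matching size satisfies μ(G) ≥ (n_r/(2k))·(1 − Σ_{t∈[r]} f_t/p_t); moreover, assuming r = o(log k), one has Σ_{t∈[r]} f_t/p_t = Σ_{t∈[r]} 1/(k^6·n_{t−1}^3) ≤ 1/2 and hence μ(G) ≥ n_r/(4k). -/
/-! ### Graph notions -/

/-- `S` is a maximal independent set of `G`. -/
def IsMIS {V : Type*} (G : SimpleGraph V) (S : Set V) : Prop :=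
  (∀ u ∈ S, ∀ v ∈ S, ¬ G.Adj u v) ∧ ∀ v, v ∉ S → ∃ u ∈ S, G.Adj u v

/-- `S` is a maximal independent set of the subgraph of `G` induced on `A`. -/
def IsMISOn {V : Type*} (G : SimpleGraph V) (A S : Set V) : Prop :=
  S ⊆ A ∧ (∀ u ∈ S, ∀ v ∈ S, ¬ G.Adj u v) ∧ ∀ v ∈ A, v ∉ S → ∃ u ∈ S, G.Adj u v

/-- A finite set of pairwise disjoint (vertex-)pairs. -/
def IsDisjointPairs {V : Type*} (M : Finset (Sym2 V)) : Prop :=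
  (∀ e ∈ M, ¬ e.IsDiag) ∧ ∀ e ∈ M, ∀ f ∈ M, e ≠ f → ∀ v : V, v ∈ e → v ∉ f

/-- The number of pairs of `M` that are actual edges of `G`. -/
noncomputable def matchedCount {V : Type*} (G : SimpleGraph V) (M : Finset (Sym2 V)) : ℝ :=
  ((M : Set (Sym2 V)) ∩ G.edgeSet).ncard

/-- The maximum size of a matching of `G`. -/
noncomputable def matchingNumber {V : Type*} [Fintype V] (G : SimpleGraph V) : ℕ :=
  sSup {m | ∃ M : Finset (Sym2 V),
    IsDisjointPairs M ∧ (M : Set (Sym2 V)) ⊆ G.edgeSet ∧ M.card = m}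


/-! ### The recursive hard distribution for approximate matching -/

/-- `apxN k r` is the number `n_r` of vertices of the `r`-round hard distribution
`D_r^apx` with bandwidth parameter `k`. -/
def apxN (k : ℕ) : ℕ → ℕ
  | 0 => 2 * k
  | r + 1 =>
    (apxN k r - 1) * (k ^ 6 * apxN k r ^ 3) +
      apxN k r * (k ^ 6 * apxN k r ^ 3 * (k ^ 6 * apxN k r ^ 3))

/-- The number `f_{r+1}` of fooling blocks of `D_{r+1}^apx`. -/
def apxF (k r : ℕ) : ℕ := k ^ 6 * apxN k r ^ 3

/-- The number `p_{r+1}` of principal blocks of `D_{r+1}^apx`. -/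
def apxP (k r : ℕ) : ℕ := k ^ 6 * apxN k r ^ 3 * apxF k r

theorem apxN_succ (k r : ℕ) :
    apxN k (r + 1) = (apxN k r - 1) * apxF k r + apxN k r * apxP k r := rfl

/-- The sample space of `D_r^apx`: at level `0` a sample is the pair `(u, v)` of
endpoints of the single edge; at level `r+1` a sample consists of an independent
`D_r^apx` sample for each principal block, an independent `D_r^apx` sample for each pair
of a principal vertex and a fooling block, and a permutation of all vertices. -/
def apxS (k : ℕ) : ℕ → Type
  | 0 => Fin k × Fin k
  | r + 1 =>
    (Fin (apxP k r) → apxS k r) ×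
    ((Fin (apxP k r) × Fin (apxN k r) × Fin (apxF k r)) → apxS k r) ×
    Equiv.Perm (Fin (apxN k (r + 1)))

instance apxS.instFintype (k : ℕ) : ∀ r, Fintype (apxS k r)
  | 0 => inferInstanceAs (Fintype (Fin k × Fin k))
  | r + 1 =>
    letI := apxS.instFintype k r
    inferInstanceAs (Fintype
      ((Fin (apxP k r) → apxS k r) ×
      ((Fin (apxP k r) × Fin (apxN k r) × Fin (apxF k r)) → apxS k r) ×
      Equiv.Perm (Fin (apxN k (r + 1)))))

/-- The probability mass function of `D_r^apx` on `apxS k r`: all constituents are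
independent, the base-level edge is uniform among the `k^2` possibilities, and the final
permutation is uniform. -/
noncomputable def apxQ (k : ℕ) : ∀ r, apxS k r → ℝ
  | 0, _ => 1 / ((k : ℝ) ^ 2)
  | r + 1, s =>
    (∏ i, apxQ k r (s.1 i)) * (∏ x, apxQ k r (s.2.1 x)) *
      (1 / (Nat.factorial (apxN k (r + 1)) : ℝ))

theorem apx_pvert_lt {p n nh : ℕ} {i a : ℕ} (hi : i < p) (ha : a < n) (h : p * n ≤ nh) :
    i * n + a < nh := by
  have h1 : i * n + a < (i + 1) * n := by rw [Nat.add_mul, Nat.one_mul]; omega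
  have h2 : (i + 1) * n ≤ p * n := Nat.mul_le_mul_right _ hi
  omega

/-- The (pre-permutation) index of the `a`-th vertex of the `i`-th principal block. -/
def apxPVert (k r : ℕ) (i : Fin (apxP k r)) (a : Fin (apxN k r)) : Fin (apxN k (r + 1)) :=
  ⟨i.val * apxN k r + a.val, by
    have h1 : i.val * apxN k r + a.val < apxP k r * apxN k r :=
      apx_pvert_lt i.isLt a.isLt (le_refl _)
    have h2 : apxN k (r + 1) = (apxN k r - 1) * apxF k r + apxN k r * apxP k r :=
      apxN_succ k r
    have h3 : apxP k r * apxN k r = apxN k r * apxP k r := Nat.mul_comm _ _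
    omega⟩

/-- The (pre-permutation) index of the `b`-th vertex of the `j`-th fooling block. -/
def apxFVert (k r : ℕ) (j : Fin (apxF k r)) (b : Fin (apxN k r - 1)) :
    Fin (apxN k (r + 1)) :=
  ⟨apxN k r * apxP k r + (j.val * (apxN k r - 1) + b.val), by
    have h1 : j.val * (apxN k r - 1) + b.val < apxF k r * (apxN k r - 1) :=
      apx_pvert_lt j.isLt b.isLt (le_refl _)
    have h2 : apxN k (r + 1) = (apxN k r - 1) * apxF k r + apxN k r * apxP k r :=
      apxN_succ k r
    have h3 : (apxN k r - 1) * apxF k r = apxF k r * (apxN k r - 1) := Nat.mul_comm _ _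
    omega⟩

/-- The graph of `D_r^apx` determined by a sample `s : apxS k r`.  At level `0` the graph
consists of the single edge between the `u`-th vertex of `U = {0, …, k-1}` and the `v`-th
vertex of `V = {k, …, 2k-1}`.  At level `r+1` it consists of the sampled principal-block
instances and, for every principal vertex `u` and fooling block `F_j`, the edges incident
to `u` of the star instance sampled on `F_j ∪ {u}` (with `u` playing the role of vertex
`0`), relabeled by the sampled permutation. -/
def apxG (k : ℕ) : ∀ r, apxS k r → SimpleGraph (Fin (apxN k r))
  | 0, uv => SimpleGraph.fromRel fun x y =>
      x.val = (show Fin k × Fin k from uv).1.val ∧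
        y.val = k + (show Fin k × Fin k from uv).2.val
  | r + 1, s => SimpleGraph.fromRel fun u v =>
      (∃ i a b, (apxG k r (s.1 i)).Adj a b ∧
        (s.2.2)⁻¹ u = apxPVert k r i a ∧ (s.2.2)⁻¹ v = apxPVert k r i b) ∨
      (∃ i a j b,
        (∃ (h0 : 0 < apxN k r) (hb : b.val + 1 < apxN k r),
          (apxG k r (s.2.1 (i, a, j))).Adj ⟨0, h0⟩ ⟨b.val + 1, hb⟩) ∧
        (s.2.2)⁻¹ u = apxPVert k r i a ∧ (s.2.2)⁻¹ v = apxFVert k r j b)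

section MyHelpers

variable {V : Type*} [Fintype V] [DecidableEq V] (G : SimpleGraph V)

lemma my_matching_bdd :
    BddAbove {m | ∃ M : Finset (Sym2 V),
      IsDisjointPairs M ∧ (M : Set (Sym2 V)) ⊆ G.edgeSet ∧ M.card = m} := by
  refine ⟨Fintype.card (Sym2 V), ?_⟩
  rintro m ⟨M, -, -, rfl⟩
  exact Finset.card_le_univ M

lemma my_le_matchingNumber {M : Finset (Sym2 V)} (h1 : IsDisjointPairs M)
    (h2 : (M : Set (Sym2 V)) ⊆ G.edgeSet) : M.card ≤ matchingNumber G :=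
  le_csSup (my_matching_bdd G) ⟨M, h1, h2, rfl⟩

lemma my_exists_max_matching :
    ∃ M : Finset (Sym2 V), IsDisjointPairs M ∧ (M : Set (Sym2 V)) ⊆ G.edgeSet ∧
      M.card = matchingNumber G := by
  have h0 : (0 : ℕ) ∈ {m | ∃ M : Finset (Sym2 V),
      IsDisjointPairs M ∧ (M : Set (Sym2 V)) ⊆ G.edgeSet ∧ M.card = m} := by
    refine ⟨∅, ⟨?_, ?_⟩, ?_, rfl⟩ <;> simp
  exact Nat.sSup_mem ⟨0, h0⟩ (my_matching_bdd G)

end MyHelpers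

lemma my_block_inj {n : ℕ} {i i' a a' : ℕ} (ha : a < n) (ha' : a' < n)
    (h : i * n + a = i' * n + a') : i = i' ∧ a = a' := by
  rcases Nat.lt_trichotomy i i' with hlt | heq | hgt
  · have h1 : (i + 1) * n ≤ i' * n := Nat.mul_le_mul_right n hlt
    rw [Nat.add_mul, Nat.one_mul] at h1
    omega
  · constructor
    · exact heq
    · subst heq; omega
  · have h1 : (i' + 1) * n ≤ i * n := Nat.mul_le_mul_right n hgt
    rw [Nat.add_mul, Nat.one_mul] at h1
    omega

/-- Injectivity of the principal-vertex embedding composed with the permutation. -/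
lemma my_phi_inj (k r : ℕ) (s : apxS k (r + 1)) {i i' : Fin (apxP k r)}
    {a a' : Fin (apxN k r)}
    (h : s.2.2 (apxPVert k r i a) = s.2.2 (apxPVert k r i' a')) : i = i' ∧ a = a' := by
  have h2 := s.2.2.injective h
  have h3 : i.val * apxN k r + a.val = i'.val * apxN k r + a'.val :=
    congrArg Fin.val h2
  obtain ⟨h4, h5⟩ := my_block_inj a.isLt a'.isLt h3
  exact ⟨Fin.ext h4, Fin.ext h5⟩

/-- The key combinatorial step: the matching number at level `r+1` dominates the sum of
the matching numbers of all principal-block instances. -/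
lemma my_step (k r : ℕ) (s : apxS k (r + 1)) :
    ∑ i : Fin (apxP k r), matchingNumber (apxG k r (s.1 i)) ≤
      matchingNumber (apxG k (r + 1) s) := by
  classical
  set φ : Fin (apxP k r) → Fin (apxN k r) → Fin (apxN k (r + 1)) :=
    fun i a => s.2.2 (apxPVert k r i a) with hφ
  have hφinj : ∀ {i i' a a'}, φ i a = φ i' a' → i = i' ∧ a = a' :=
    fun h => my_phi_inj k r s h
  choose M hMd hMe hMc using fun i => my_exists_max_matching (apxG k r (s.1 i))
  set MM : Finset (Sym2 (Fin (apxN k (r + 1)))) :=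
    Finset.univ.biUnion (fun i => (M i).image (Sym2.map (φ i))) with hMM
  -- membership characterization
  have hmem : ∀ e ∈ MM, ∃ i, ∃ e0 ∈ M i, Sym2.map (φ i) e0 = e := by
    intro e he
    simp only [hMM, Finset.mem_biUnion, Finset.mem_image, Finset.mem_univ, true_and] at he
    obtain ⟨i, e0, he0, rfl⟩ := he
    exact ⟨i, e0, he0, rfl⟩
  -- edges
  have hedge : (MM : Set (Sym2 (Fin (apxN k (r + 1))))) ⊆ (apxG k (r + 1) s).edgeSet := by
    intro e he
    obtain ⟨i, e0, he0, rfl⟩ := hmem e he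
    induction e0 using Sym2.ind with
    | _ a b =>
      have hadj : (apxG k r (s.1 i)).Adj a b := (hMe i) he0
      rw [Sym2.map_pair_eq, SimpleGraph.mem_edgeSet]
      have hne : φ i a ≠ φ i b := by
        intro hcon
        exact hadj.ne (hφinj hcon).2
      refine ⟨hne, Or.inl (Or.inl ⟨i, a, b, hadj, ?_, ?_⟩)⟩ <;>
        simp [hφ, Equiv.Perm.inv_def]
  -- disjoint pairs
  have hdp : IsDisjointPairs MM := by
    constructor
    · intro e he
      obtain ⟨i, e0, he0, rfl⟩ := hmem e he
      induction e0 using Sym2.ind with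
      | _ a b =>
        rw [Sym2.map_pair_eq, Sym2.mk_isDiag_iff]
        intro hcon
        exact ((hMd i).1 _ he0) (Sym2.mk_isDiag_iff.2 (hφinj hcon).2)
    · intro e he f hf hef v hv hvf
      obtain ⟨i, e0, he0, rfl⟩ := hmem e he
      obtain ⟨j, f0, hf0, rfl⟩ := hmem f hf
      obtain ⟨a, ha, rfl⟩ := Sym2.mem_map.1 hv
      obtain ⟨b, hb, hba⟩ := Sym2.mem_map.1 hvf
      obtain ⟨hij, hab⟩ := hφinj hba.symm
      subst hij
      subst hab
      by_cases h0 : e0 = f0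
      · exact hef (by rw [h0])
      · exact ((hMd i).2 e0 he0 f0 hf0 h0 a ha) hb
  -- cardinality
  have hcard : MM.card = ∑ i, matchingNumber (apxG k r (s.1 i)) := by
    rw [hMM, Finset.card_biUnion]
    · refine Finset.sum_congr rfl fun i _ => ?_
      rw [Finset.card_image_of_injective _ (Sym2.map.injective fun a a' h => (hφinj h).2),
        hMc]
    · intro i _ j _ hij
      rw [Function.onFun, Finset.disjoint_left]
      intro e hei hej
      simp only [Finset.mem_image] at hei hej
      obtain ⟨e0, he0, rfl⟩ := hei
      obtain ⟨f0, hf0, hf0e⟩ := hej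
      have hv : φ i e0.out.1 ∈ Sym2.map (φ i) e0 :=
        Sym2.mem_map.2 ⟨e0.out.1, Sym2.out_fst_mem e0, rfl⟩
      rw [← hf0e] at hv
      obtain ⟨b, -, hb⟩ := Sym2.mem_map.1 hv
      exact hij ((hφinj hb).1).symm
  calc ∑ i, matchingNumber (apxG k r (s.1 i)) = MM.card := hcard.symm
    _ ≤ matchingNumber (apxG k (r + 1) s) := my_le_matchingNumber _ hdp hedge
lemma my_apxN_zero (r : ℕ) : apxN 0 r = 0 := by
  induction r with
  | zero => rfl
  | succ r ih => simp [apxN, ih]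

lemma my_apxN_pos (k r : ℕ) (hk : 1 ≤ k) : 1 ≤ apxN k r := by
  induction r with
  | zero => simp [apxN]; omega
  | succ r ih =>
    have hp : 1 ≤ apxP k r := by
      have : 1 ≤ k ^ 6 * apxN k r ^ 3 := Nat.one_le_iff_ne_zero.2 (by positivity)
      simpa [apxP, apxF] using Nat.mul_le_mul this this
    calc 1 ≤ apxN k r * apxP k r := Nat.mul_le_mul ih hp
      _ ≤ apxN k (r + 1) := by rw [apxN_succ]; omega

lemma my_apxN_ge (k r : ℕ) (hk : 1 ≤ k) : 2 ^ (r + 1) ≤ apxN k r := by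
  induction r with
  | zero => simp [apxN]; omega
  | succ r ih =>
    have hn1 : 1 ≤ apxN k r := my_apxN_pos k r hk
    have hn2 : 2 ≤ apxN k r := by
      have h21 : 2 ^ 1 ≤ 2 ^ (r + 1) := Nat.pow_le_pow_right (by norm_num) (by omega)
      omega
    have hf : 2 ≤ apxF k r := by
      calc 2 ≤ apxN k r ^ 3 :=
            le_trans hn2 (Nat.le_self_pow (by norm_num) _)
        _ ≤ k ^ 6 * apxN k r ^ 3 := Nat.le_mul_of_pos_left _ (by positivity)
    have hp : 2 ≤ apxP k r := by
      calc 2 ≤ k ^ 6 * apxN k r ^ 3 := hf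
        _ ≤ apxP k r := Nat.le_mul_of_pos_right _ (by omega)
    calc 2 ^ (r + 2) = 2 ^ (r + 1) * 2 := by ring
      _ ≤ apxN k r * apxP k r := Nat.mul_le_mul ih hp
      _ ≤ apxN k (r + 1) := by rw [apxN_succ]; omega

lemma my_base (k : ℕ) (hk : 1 ≤ k) (s : apxS k 0) : 1 ≤ matchingNumber (apxG k 0 s) := by
  classical
  set uv : Fin k × Fin k := s with huv
  have hx : (uv.1.val : ℕ) < apxN k 0 := by
    have := uv.1.isLt; simp [apxN]; omega
  have hy : k + uv.2.val < apxN k 0 := by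
    have := uv.2.isLt; simp [apxN]; omega
  set x : Fin (apxN k 0) := ⟨uv.1.val, hx⟩
  set y : Fin (apxN k 0) := ⟨k + uv.2.val, hy⟩
  have hxy : x ≠ y := by
    intro h
    have := congrArg Fin.val h
    have := uv.1.isLt
    simp [x, y] at *
    omega
  have hadj : (apxG k 0 s).Adj x y := by
    refine ⟨hxy, Or.inl ⟨rfl, rfl⟩⟩
  have h1 : ({s(x, y)} : Finset (Sym2 (Fin (apxN k 0)))).card ≤ matchingNumber (apxG k 0 s) := by
    apply my_le_matchingNumber
    · constructor
      · intro e he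
        rw [Finset.mem_singleton] at he
        subst he
        rw [Sym2.mk_isDiag_iff]
        exact hxy
      · intro e he f hf hef
        rw [Finset.mem_singleton] at he hf
        exact absurd (he.trans hf.symm) hef
    · intro e he
      simp only [Finset.coe_singleton, Set.mem_singleton_iff] at he
      subst he
      exact hadj
  simpa using h1

/-- Cast identity for `apxN (r+1)`. -/
lemma my_apxN_succ_cast (k r : ℕ) (hk : 1 ≤ k) :
    (apxN k (r + 1) : ℝ) =
      ((apxN k r : ℝ) - 1) * (apxF k r : ℝ) + (apxN k r : ℝ) * (apxP k r : ℝ) := by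
  have h1 : 1 ≤ apxN k r := my_apxN_pos k r hk
  rw [apxN_succ]
  push_cast [h1]
  ring

/-- The arithmetic step: `c_{r+1} ≤ p_r · c_r`. -/
lemma my_arith (k r : ℕ) (hk : 1 ≤ k) (S : ℝ) (hS : 0 ≤ S) :
    ((apxN k (r + 1) : ℝ) / (2 * k)) *
        (1 - (S + 1 / ((k : ℝ) ^ 6 * (apxN k r : ℝ) ^ 3))) ≤
      (apxP k r : ℝ) * (((apxN k r : ℝ) / (2 * k)) * (1 - S)) := by
  have hk0 : (0 : ℝ) < k := by exact_mod_cast hk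
  have h2k : (0 : ℝ) < 2 * k := by positivity
  set n : ℝ := (apxN k r : ℝ) with hn
  set f : ℝ := (apxF k r : ℝ) with hf
  set p : ℝ := (apxP k r : ℝ) with hp
  have hn1 : (1 : ℝ) ≤ n := by rw [hn]; exact_mod_cast my_apxN_pos k r hk
  have hfval : f = (k : ℝ) ^ 6 * n ^ 3 := by rw [hf, hn, apxF]; push_cast; ring
  have hf1 : (1 : ℝ) ≤ f := by
    have h1 : 1 ≤ apxF k r := Nat.one_le_iff_ne_zero.2 (by
      have h2 := my_apxN_pos k r hk
      simp only [apxF]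
      positivity)
    rw [hf]; exact_mod_cast h1
  have hf0 : (0 : ℝ) < f := by linarith
  have hpval : p = f * f := by
    rw [hp, hf]
    have : apxP k r = apxF k r * apxF k r := rfl
    rw [this]; push_cast; ring
  have hN : (apxN k (r + 1) : ℝ) = (n - 1) * f + n * p := my_apxN_succ_cast k r hk
  rw [hN, ← hfval]
  rw [div_mul_eq_mul_div, div_le_iff₀ h2k]
  have key : ((n - 1) * f + n * p) * (1 - (S + 1 / f)) ≤ p * (n * (1 - S)) := by
    have hinv : (1 / f) * f = 1 := by field_simp
    have hnf : (0:ℝ) ≤ (n - 1) * f := mul_nonneg (by linarith) (by linarith)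
    have h1 : (n - 1) * f * (1 - S) ≤ (n - 1) * f := by nlinarith [mul_nonneg hnf hS]
    have h2 : ((n - 1) * f + n * p) * (1 / f) ≥ (n - 1) * f + 0 := by
      have e1 : ((n - 1) * f + n * p) * (1 / f) = (n - 1) + n * f := by
        rw [hpval]; field_simp
      rw [e1]
      nlinarith
    nlinarith
  calc ((n - 1) * f + n * p) * (1 - (S + 1 / f))
      ≤ p * (n * (1 - S)) := key
    _ = p * (n / (2 * k) * (1 - S)) * (2 * k) := by field_simp
/-- The main induction: matching lower bound for every sample, `k ≥ 1`. -/
lemma my_main (k : ℕ) (hk : 1 ≤ k) : ∀ r (s : apxS k r),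
    ((apxN k r : ℝ) / (2 * k)) *
        (1 - ∑ t ∈ Finset.range r, 1 / ((k : ℝ) ^ 6 * (apxN k t : ℝ) ^ 3)) ≤
      (matchingNumber (apxG k r s) : ℝ) := by
  intro r
  induction r with
  | zero =>
    intro s
    have h1 : (1 : ℕ) ≤ matchingNumber (apxG k 0 s) := my_base k hk s
    have hk0 : (0 : ℝ) < k := by exact_mod_cast hk
    have hn0 : (apxN k 0 : ℝ) = 2 * k := by
      have : apxN k 0 = 2 * k := rfl
      rw [this]; push_cast; ring
    rw [Finset.range_zero, Finset.sum_empty, hn0]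
    have : (2 * (k : ℝ)) / (2 * k) * (1 - 0) = 1 := by field_simp; norm_num
    rw [this]
    exact_mod_cast h1
  | succ r ih =>
    intro s
    have hS0 : 0 ≤ ∑ t ∈ Finset.range r, 1 / ((k : ℝ) ^ 6 * (apxN k t : ℝ) ^ 3) := by
      apply Finset.sum_nonneg
      intro t _
      positivity
    have step1 : ((apxN k (r + 1) : ℝ) / (2 * k)) *
        (1 - ∑ t ∈ Finset.range (r + 1), 1 / ((k : ℝ) ^ 6 * (apxN k t : ℝ) ^ 3)) ≤
        (apxP k r : ℝ) * (((apxN k r : ℝ) / (2 * k)) *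
          (1 - ∑ t ∈ Finset.range r, 1 / ((k : ℝ) ^ 6 * (apxN k t : ℝ) ^ 3))) := by
      rw [Finset.sum_range_succ]
      exact my_arith k r hk _ hS0
    have step2 : (apxP k r : ℝ) * (((apxN k r : ℝ) / (2 * k)) *
          (1 - ∑ t ∈ Finset.range r, 1 / ((k : ℝ) ^ 6 * (apxN k t : ℝ) ^ 3))) ≤
        ∑ i : Fin (apxP k r), (matchingNumber (apxG k r (s.1 i)) : ℝ) := by
      calc (apxP k r : ℝ) * _ = ∑ _i : Fin (apxP k r), (((apxN k r : ℝ) / (2 * k)) *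
            (1 - ∑ t ∈ Finset.range r, 1 / ((k : ℝ) ^ 6 * (apxN k t : ℝ) ^ 3))) := by
            rw [Finset.sum_const, Finset.card_univ, Fintype.card_fin, nsmul_eq_mul]
        _ ≤ ∑ i : Fin (apxP k r), (matchingNumber (apxG k r (s.1 i)) : ℝ) :=
            Finset.sum_le_sum fun i _ => ih (s.1 i)
    have step3 : (∑ i : Fin (apxP k r), (matchingNumber (apxG k r (s.1 i)) : ℝ)) ≤
        (matchingNumber (apxG k (r + 1) s) : ℝ) := by
      rw [← Nat.cast_sum]
      exact_mod_cast my_step k r s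
    linarith

/-- The sum of `f_t/p_t` is at most `1/2` whenever `k ≥ 1`. -/
lemma my_sum_le (k r : ℕ) (hk : 1 ≤ k) :
    ∑ t ∈ Finset.range r, 1 / ((k : ℝ) ^ 6 * (apxN k t : ℝ) ^ 3) ≤ 1 / 2 := by
  have hterm : ∀ t, 1 / ((k : ℝ) ^ 6 * (apxN k t : ℝ) ^ 3) ≤ (1 / 8 : ℝ) ^ (t + 1) := by
    intro t
    have h1 : (8 : ℝ) ^ (t + 1) ≤ (k : ℝ) ^ 6 * (apxN k t : ℝ) ^ 3 := by
      have hn : (2 : ℕ) ^ (t + 1) ≤ apxN k t := my_apxN_ge k t hk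
      have hnr : (2 : ℝ) ^ (t + 1) ≤ (apxN k t : ℝ) := by exact_mod_cast hn
      have hk1 : (1 : ℝ) ≤ (k : ℝ) ^ 6 := one_le_pow₀ (by exact_mod_cast hk)
      have h2 : ((2 : ℝ) ^ (t + 1)) ^ 3 ≤ (apxN k t : ℝ) ^ 3 :=
        pow_le_pow_left₀ (by positivity) hnr 3
      have h3 : ((2 : ℝ) ^ (t + 1)) ^ 3 = (8 : ℝ) ^ (t + 1) := by
        rw [← pow_mul, mul_comm, pow_mul]; norm_num
      nlinarith [pow_pos (by norm_num : (0:ℝ) < 2) (t+1), pow_pos (by norm_num : (0:ℝ) < 8) (t+1)]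
    have h0 : (0 : ℝ) < (8 : ℝ) ^ (t + 1) := by positivity
    calc 1 / ((k : ℝ) ^ 6 * (apxN k t : ℝ) ^ 3) ≤ 1 / (8 : ℝ) ^ (t + 1) :=
          one_div_le_one_div_of_le h0 h1
      _ = (1 / 8 : ℝ) ^ (t + 1) := by rw [one_div_pow]
  calc ∑ t ∈ Finset.range r, 1 / ((k : ℝ) ^ 6 * (apxN k t : ℝ) ^ 3)
      ≤ ∑ t ∈ Finset.range r, (1 / 8 : ℝ) ^ (t + 1) :=
        Finset.sum_le_sum fun t _ => hterm t
    _ = (1 / 8 : ℝ) * ∑ t ∈ Finset.range r, (1 / 8 : ℝ) ^ t := by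
        rw [Finset.mul_sum]
        exact Finset.sum_congr rfl fun t _ => by rw [pow_succ']
    _ ≤ 1 / 2 := by
        rw [geom_sum_eq (by norm_num : (1/8 : ℝ) ≠ 1)]
        have h8 : (0:ℝ) ≤ (1/8 : ℝ) ^ r := by positivity
        have h9 : ((1/8 : ℝ) ^ r - 1) / (1/8 - 1) = (1 - (1/8:ℝ)^r) * (8/7) := by
          ring
        rw [h9]
        nlinarith
open Filter in
/-- For every graph `G` in the support of `D_r^apx` the maximum
matching size satisfies `μ(G) ≥ (n_r/(2k)) · (1 - ∑_{t ∈ [r]} f_t/p_t)`, where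
`f_t/p_t = 1/(k^6 · n_{t-1}^3)`; moreover, assuming `r = o(log k)`, one has
`∑_{t ∈ [r]} f_t/p_t ≤ 1/2` and hence `μ(G) ≥ n_r/(4k)`. -/
theorem apx_matching_size :
    (∀ (k r : ℕ) (G : SimpleGraph (Fin (apxN k r))), G ∈ Set.range (apxG k r) →
      ((apxN k r : ℝ) / (2 * (k : ℝ))) *
          (1 - ∑ t ∈ Finset.range r, 1 / ((k : ℝ) ^ 6 * (apxN k t : ℝ) ^ 3)) ≤
        (matchingNumber G : ℝ)) ∧
    (∀ r : ℕ → ℕ,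
      (fun k : ℕ => (r k : ℝ)) =o[atTop] (fun k : ℕ => Real.log k) →
      ∀ᶠ k in atTop,
        (∑ t ∈ Finset.range (r k), 1 / ((k : ℝ) ^ 6 * (apxN k t : ℝ) ^ 3)) ≤ 1 / 2 ∧
        ∀ G : SimpleGraph (Fin (apxN k (r k))), G ∈ Set.range (apxG k (r k)) →
          (apxN k (r k) : ℝ) / (4 * (k : ℝ)) ≤ (matchingNumber G : ℝ)) := by
  constructor
  · intro k r G hG
    obtain ⟨s, rfl⟩ := hG
    rcases Nat.eq_zero_or_pos k with hk | hk
    · subst hk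
      have h : ((apxN 0 r : ℕ) : ℝ) = 0 := by exact_mod_cast my_apxN_zero r
      have hL : ((apxN 0 r : ℝ) / (2 * (0 : ℕ)) : ℝ) *
          (1 - ∑ t ∈ Finset.range r, 1 / (((0 : ℕ) : ℝ) ^ 6 * (apxN 0 t : ℝ) ^ 3)) = 0 := by
        rw [h]; simp
      rw [hL]
      exact Nat.cast_nonneg _
    · exact my_main k hk r s
  · intro r _
    filter_upwards [Filter.eventually_ge_atTop 1] with k hk
    refine ⟨my_sum_le k (r k) hk, ?_⟩
    intro G hG
    obtain ⟨s, rfl⟩ := hG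
    have h1 := my_main k hk (r k) s
    have h2 := my_sum_le k (r k) hk
    have hk0 : (0 : ℝ) < k := by exact_mod_cast hk
    have hn0 : (0 : ℝ) ≤ (apxN k (r k) : ℝ) / (2 * k) := by positivity
    have h3 : (apxN k (r k) : ℝ) / (4 * k) ≤ (apxN k (r k) : ℝ) / (2 * k) *
        (1 - ∑ t ∈ Finset.range (r k), 1 / ((k : ℝ) ^ 6 * (apxN k t : ℝ) ^ 3)) := by
      have he : (apxN k (r k) : ℝ) / (4 * k) = (apxN k (r k) : ℝ) / (2 * k) * (1 / 2) := by
        ring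
      rw [he]
      exact mul_le_mul_of_nonneg_left (by linarith) hn0
    linarith
end

section
/- Let A, B, C, D be finitely-supported random variables on a common probability space. If A and D are conditionally independent given C, then I(A; B | C) ≤ I(A; B | C, D). -/
/-! ### Finite probability and information-theory helpers -/

open Classical in
noncomputable def probEvent {Ω : Type*} [Fintype Ω] (p : Ω → ℝ) (E : Ω → Prop) : ℝ :=
  ∑ ω, if E ω then p ω else 0

noncomputable def condProb {Ω : Type*} [Fintype Ω] (p : Ω → ℝ) (E F : Ω → Prop) : ℝ :=
  probEvent p (fun ω => E ω ∧ F ω) / probEvent p F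

open Classical in
noncomputable def entropy {Ω A : Type*} [Fintype Ω] (p : Ω → ℝ) (X : Ω → A) : ℝ :=
  ∑ a ∈ Finset.univ.image X, Real.negMulLog (probEvent p (fun ω => X ω = a))

noncomputable def condEntropy {Ω A B : Type*} [Fintype Ω] (p : Ω → ℝ)
    (X : Ω → A) (Y : Ω → B) : ℝ :=
  entropy p (fun ω => (X ω, Y ω)) - entropy p Y

/-- Conditional mutual information `I(X;Y|Z) = H(X|Z) - H(X|(Y,Z))`. -/
noncomputable def condMI {Ω A B C : Type*} [Fintype Ω] (p : Ω → ℝ)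
    (X : Ω → A) (Y : Ω → B) (Z : Ω → C) : ℝ :=
  condEntropy p X Z - condEntropy p X (fun ω => (Y ω, Z ω))


section helpers
variable {Ω : Type*} [Fintype Ω] (p : Ω → ℝ)

open Finset

lemma probEvent_congr {E F : Ω → Prop} (h : ∀ ω, E ω ↔ F ω) :
    probEvent p E = probEvent p F := by
  have : E = F := funext fun ω => propext (h ω)
  rw [this]

lemma probEvent_eq_sum_filter (E : Ω → Prop) [DecidablePred E] :
    probEvent p E = ∑ ω ∈ Finset.univ.filter E, p ω := by
  unfold probEvent
  rw [Finset.sum_filter]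
  exact Finset.sum_congr rfl fun ω _ => by congr 1

lemma probEvent_nonneg (hp0 : ∀ ω, 0 ≤ p ω) (E : Ω → Prop) : 0 ≤ probEvent p E := by
  unfold probEvent
  exact Finset.sum_nonneg fun ω _ => by by_cases h : E ω <;> simp [h, hp0 ω]

lemma probEvent_pos (hp0 : ∀ ω, 0 ≤ p ω) {E : Ω → Prop} {ω : Ω} (hω : 0 < p ω) (hE : E ω) :
    0 < probEvent p E := by
  unfold probEvent
  refine Finset.sum_pos' (fun i _ => by by_cases h : E i <;> simp [h, hp0 i]) ⟨ω, by simp, by simp [hE, hω]⟩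

lemma sum_fiber {γ : Type*} [DecidableEq γ] (V : Ω → γ) (F : γ → ℝ) :
    ∑ v ∈ Finset.univ.image V, probEvent p (fun ω => V ω = v) * F v
      = ∑ ω, p ω * F (V ω) := by
  classical
  have : ∀ v, probEvent p (fun ω => V ω = v) * F v
      = ∑ ω ∈ Finset.univ.filter (fun ω => V ω = v), p ω * F (V ω) := by
    intro v
    rw [probEvent_eq_sum_filter, Finset.sum_mul]
    exact Finset.sum_congr rfl fun ω hω => by rw [(Finset.mem_filter.1 hω).2]
  rw [Finset.sum_congr rfl fun v _ => this v]
  exact Finset.sum_fiberwise_of_maps_to (fun ω _ => Finset.mem_image_of_mem V (Finset.mem_univ ω)) _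

end helpers

section helpers2
variable {Ω : Type*} [Fintype Ω] (p : Ω → ℝ)

lemma entropy_eq_sum_omega {A : Type*} (X : Ω → A) :
    entropy p X = ∑ ω, p ω * (- Real.log (probEvent p (fun ω' => X ω' = X ω))) := by
  classical
  rw [entropy, ← sum_fiber p X (fun a => - Real.log (probEvent p (fun ω' => X ω' = a)))]
  exact Finset.sum_congr rfl fun a _ => by rw [Real.negMulLog]; ring

lemma sum_probEvent_marginal {A : Type*} [DecidableEq A] (X : Ω → A) (E : Ω → Prop) :
    ∑ a ∈ Finset.univ.image X, probEvent p (fun ω => X ω = a ∧ E ω) = probEvent p E := by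
  classical
  unfold probEvent
  rw [Finset.sum_comm]
  refine Finset.sum_congr rfl fun ω _ => ?_
  rw [Finset.sum_eq_single_of_mem (X ω) (Finset.mem_image_of_mem X (Finset.mem_univ ω))]
  · simp
  · intro b _ hb
    simp [Ne.symm hb]

lemma sum_probEvent_eq_one {A : Type*} [DecidableEq A] (hp1 : ∑ ω, p ω = 1) (X : Ω → A) :
    ∑ a ∈ Finset.univ.image X, probEvent p (fun ω => X ω = a) = 1 := by
  have := sum_fiber p X (fun _ => (1 : ℝ))
  simpa [hp1] using this

end helpers2

section key
variable {Ω A B C : Type*} [Fintype Ω] (p : Ω → ℝ)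

open Finset

lemma key_sum_le_one (hp0 : ∀ ω, 0 ≤ p ω) (hp1 : ∑ ω, p ω = 1)
    (X : Ω → A) (Y : Ω → B) (Z : Ω → C) :
    ∑ ω, p ω *
      (probEvent p (fun ω' => (X ω', Z ω') = (X ω, Z ω)) *
        probEvent p (fun ω' => (Y ω', Z ω') = (Y ω, Z ω)) /
      (probEvent p (fun ω' => (X ω', (Y ω', Z ω')) = (X ω, (Y ω, Z ω))) *
        probEvent p (fun ω' => Z ω' = Z ω))) ≤ 1 := by
  classical
  set G : A × B × C → ℝ := fun v =>
    probEvent p (fun ω' => (X ω', Z ω') = (v.1, v.2.2)) *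
      probEvent p (fun ω' => (Y ω', Z ω') = v.2) /
    (probEvent p (fun ω' => (X ω', (Y ω', Z ω')) = v) *
      probEvent p (fun ω' => Z ω' = v.2.2)) with hG
  set H : A × B × C → ℝ := fun v =>
    probEvent p (fun ω' => (X ω', Z ω') = (v.1, v.2.2)) *
      (probEvent p (fun ω' => (Y ω', Z ω') = v.2) /
        probEvent p (fun ω' => Z ω' = v.2.2)) with hH
  have hHnn : ∀ v, 0 ≤ H v := fun v =>
    mul_nonneg (probEvent_nonneg p hp0 _) (div_nonneg (probEvent_nonneg p hp0 _)
      (probEvent_nonneg p hp0 _))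
  have step0 : ∑ ω, p ω *
      (probEvent p (fun ω' => (X ω', Z ω') = (X ω, Z ω)) *
        probEvent p (fun ω' => (Y ω', Z ω') = (Y ω, Z ω)) /
      (probEvent p (fun ω' => (X ω', (Y ω', Z ω')) = (X ω, (Y ω, Z ω))) *
        probEvent p (fun ω' => Z ω' = Z ω)))
      = ∑ v ∈ Finset.univ.image (fun ω => (X ω, (Y ω, Z ω))),
          probEvent p (fun ω => (X ω, (Y ω, Z ω)) = v) * G v := by
    rw [sum_fiber p (fun ω => (X ω, (Y ω, Z ω))) G]
  rw [step0]
  have step1 : ∀ v ∈ Finset.univ.image (fun ω => (X ω, (Y ω, Z ω))),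
      probEvent p (fun ω => (X ω, (Y ω, Z ω)) = v) * G v ≤ H v := by
    intro v _
    by_cases h1 : probEvent p (fun ω' => (X ω', (Y ω', Z ω')) = v) = 0
    · rw [hG]
      simp only [h1, zero_mul, div_zero, mul_zero]
      exact hHnn v
    · by_cases h2 : probEvent p (fun ω' => Z ω' = v.2.2) = 0
      · rw [hG, hH]
        simp [h2]
      · refine le_of_eq ?_
        rw [hG, hH]
        field_simp
  refine le_trans (Finset.sum_le_sum step1) ?_
  have himg : Finset.univ.image (fun ω => (X ω, (Y ω, Z ω))) ⊆
      (Finset.univ.image X) ×ˢ (Finset.univ.image (fun ω => (Y ω, Z ω))) := by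
    intro v hv
    simp only [Finset.mem_image, Finset.mem_univ, true_and, Finset.mem_product] at hv ⊢
    obtain ⟨ω, rfl⟩ := hv
    exact ⟨⟨ω, rfl⟩, ⟨ω, rfl⟩⟩
  refine le_trans (Finset.sum_le_sum_of_subset_of_nonneg himg (fun v _ _ => hHnn v)) ?_
  rw [Finset.sum_product_right]
  have step2 : ∀ e ∈ Finset.univ.image (fun ω => (Y ω, Z ω)),
      ∑ a ∈ Finset.univ.image X, H (a, e) ≤ probEvent p (fun ω' => (Y ω', Z ω') = e) := by
    intro e _
    have hmarg : ∑ a ∈ Finset.univ.image X,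
        probEvent p (fun ω' => (X ω', Z ω') = (a, e.2)) = probEvent p (fun ω' => Z ω' = e.2) := by
      rw [← sum_probEvent_marginal p X (fun ω' => Z ω' = e.2)]
      exact Finset.sum_congr rfl fun a _ => probEvent_congr p (fun ω => by
        constructor
        · intro h; exact ⟨congrArg Prod.fst h, congrArg Prod.snd h⟩
        · rintro ⟨h1, h2⟩; exact Prod.ext h1 h2)
    rw [hH]
    simp only
    rw [← Finset.sum_mul, hmarg]
    by_cases h2 : probEvent p (fun ω' => Z ω' = e.2) = 0
    · simp [h2]
      exact probEvent_nonneg p hp0 _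
    · rw [mul_comm, div_mul_cancel₀ _ h2]
  refine le_trans (Finset.sum_le_sum step2) ?_
  rw [sum_probEvent_eq_one p hp1 (fun ω => (Y ω, Z ω))]

end key

section mi
variable {Ω A B C : Type*} [Fintype Ω] (p : Ω → ℝ)

lemma condMI_eq_sum (X : Ω → A) (Y : Ω → B) (Z : Ω → C) :
    condMI p X Y Z = ∑ ω, p ω *
      (Real.log (probEvent p (fun ω' => (X ω', (Y ω', Z ω')) = (X ω, (Y ω, Z ω))))
       + Real.log (probEvent p (fun ω' => Z ω' = Z ω))
       - Real.log (probEvent p (fun ω' => (X ω', Z ω') = (X ω, Z ω)))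
       - Real.log (probEvent p (fun ω' => (Y ω', Z ω') = (Y ω, Z ω)))) := by
  rw [condMI, condEntropy, condEntropy, entropy_eq_sum_omega, entropy_eq_sum_omega,
    entropy_eq_sum_omega, entropy_eq_sum_omega]
  rw [← Finset.sum_sub_distrib, ← Finset.sum_sub_distrib, ← Finset.sum_sub_distrib]
  exact Finset.sum_congr rfl fun ω _ => by ring

lemma condMI_nonneg (hp0 : ∀ ω, 0 ≤ p ω) (hp1 : ∑ ω, p ω = 1)
    (X : Ω → A) (Y : Ω → B) (Z : Ω → C) :
    0 ≤ condMI p X Y Z := by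
  classical
  set r : Ω → ℝ := fun ω => if p ω = 0 then 1 else
    probEvent p (fun ω' => (X ω', Z ω') = (X ω, Z ω)) *
      probEvent p (fun ω' => (Y ω', Z ω') = (Y ω, Z ω)) /
    (probEvent p (fun ω' => (X ω', (Y ω', Z ω')) = (X ω, (Y ω, Z ω))) *
      probEvent p (fun ω' => Z ω' = Z ω)) with hr
  have hrpos : ∀ ω, 0 < r ω := by
    intro ω
    rw [hr]
    by_cases h : p ω = 0
    · simp [h]
    · have hp : 0 < p ω := lt_of_le_of_ne (hp0 ω) (Ne.symm h)
      simp only [h, if_false]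
      have h1 := probEvent_pos p hp0 (E := fun ω' => (X ω', (Y ω', Z ω')) = (X ω, (Y ω, Z ω))) hp rfl
      have h2 := probEvent_pos p hp0 (E := fun ω' => Z ω' = Z ω) hp rfl
      have h3 := probEvent_pos p hp0 (E := fun ω' => (X ω', Z ω') = (X ω, Z ω)) hp rfl
      have h4 := probEvent_pos p hp0 (E := fun ω' => (Y ω', Z ω') = (Y ω, Z ω)) hp rfl
      positivity
  have heq : condMI p X Y Z = -∑ ω, p ω * Real.log (r ω) := by
    rw [condMI_eq_sum, ← Finset.sum_neg_distrib]
    refine Finset.sum_congr rfl fun ω _ => ?_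
    by_cases h : p ω = 0
    · simp [h]
    · have hp : 0 < p ω := lt_of_le_of_ne (hp0 ω) (Ne.symm h)
      have h1 := probEvent_pos p hp0 (E := fun ω' => (X ω', (Y ω', Z ω')) = (X ω, (Y ω, Z ω))) hp rfl
      have h2 := probEvent_pos p hp0 (E := fun ω' => Z ω' = Z ω) hp rfl
      have h3 := probEvent_pos p hp0 (E := fun ω' => (X ω', Z ω') = (X ω, Z ω)) hp rfl
      have h4 := probEvent_pos p hp0 (E := fun ω' => (Y ω', Z ω') = (Y ω, Z ω)) hp rfl
      rw [hr]
      simp only [h, if_false]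
      rw [Real.log_div (by positivity) (by positivity), Real.log_mul (by positivity) (by positivity),
        Real.log_mul (by positivity) (by positivity)]
      ring
  rw [heq, neg_nonneg]
  have jensen : ∑ ω, p ω * Real.log (r ω) ≤ Real.log (∑ ω, p ω * r ω) := by
    have := (strictConcaveOn_log_Ioi.concaveOn).le_map_sum (t := Finset.univ)
      (w := p) (p := r) (fun ω _ => hp0 ω) hp1 (fun ω _ => hrpos ω)
    simpa [smul_eq_mul] using this
  refine le_trans jensen (Real.log_nonpos (Finset.sum_nonneg fun ω _ =>
    mul_nonneg (hp0 ω) (hrpos ω).le) ?_)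
  have : ∑ ω, p ω * r ω = ∑ ω, p ω *
      (probEvent p (fun ω' => (X ω', Z ω') = (X ω, Z ω)) *
        probEvent p (fun ω' => (Y ω', Z ω') = (Y ω, Z ω)) /
      (probEvent p (fun ω' => (X ω', (Y ω', Z ω')) = (X ω, (Y ω, Z ω))) *
        probEvent p (fun ω' => Z ω' = Z ω))) := by
    refine Finset.sum_congr rfl fun ω _ => ?_
    by_cases h : p ω = 0
    · simp [h]
    · rw [hr]; simp [h]
  rw [this]
  exact key_sum_le_one p hp0 hp1 X Y Z

end mi

/-- Let `A, B, C, D` be finitely-supported random variables on a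
common (finite) probability space.  If `A` and `D` are conditionally independent given
`C`, then `I(A; B | C) ≤ I(A; B | C, D)`. -/
theorem condMI_le_of_condIndep {Ω A B C D : Type*} [Fintype Ω]
    (p : Ω → ℝ) (hp0 : ∀ ω, 0 ≤ p ω) (hp1 : ∑ ω, p ω = 1)
    (X : Ω → A) (Y : Ω → B) (Z : Ω → C) (W : Ω → D)
    (hind : ∀ (a : A) (d : D) (c : C),
      probEvent p (fun ω => X ω = a ∧ W ω = d ∧ Z ω = c) *
          probEvent p (fun ω => Z ω = c) =
        probEvent p (fun ω => X ω = a ∧ Z ω = c) *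
          probEvent p (fun ω => W ω = d ∧ Z ω = c)) :
    condMI p X Y Z ≤ condMI p X Y (fun ω => (Z ω, W ω)) := by
  classical
  have hJ1 : condMI p X W Z = 0 := by
    rw [condMI_eq_sum]
    refine Finset.sum_eq_zero fun ω _ => ?_
    by_cases h : p ω = 0
    · simp [h]
    · have hp : 0 < p ω := lt_of_le_of_ne (hp0 ω) (Ne.symm h)
      have e1 : probEvent p (fun ω' => (X ω', (W ω', Z ω')) = (X ω, (W ω, Z ω)))
          = probEvent p (fun ω' => X ω' = X ω ∧ W ω' = W ω ∧ Z ω' = Z ω) :=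
        probEvent_congr p fun ω' => by simp [Prod.ext_iff]
      have e3 : probEvent p (fun ω' => (X ω', Z ω') = (X ω, Z ω))
          = probEvent p (fun ω' => X ω' = X ω ∧ Z ω' = Z ω) :=
        probEvent_congr p fun ω' => by simp [Prod.ext_iff]
      have e4 : probEvent p (fun ω' => (W ω', Z ω') = (W ω, Z ω))
          = probEvent p (fun ω' => W ω' = W ω ∧ Z ω' = Z ω) :=
        probEvent_congr p fun ω' => by simp [Prod.ext_iff]
      rw [e1, e3, e4]
      have h1 : 0 < probEvent p (fun ω' => X ω' = X ω ∧ W ω' = W ω ∧ Z ω' = Z ω) :=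
        probEvent_pos p hp0 (E := fun ω' => X ω' = X ω ∧ W ω' = W ω ∧ Z ω' = Z ω) hp
          ⟨rfl, rfl, rfl⟩
      have h2 : 0 < probEvent p (fun ω' => Z ω' = Z ω) :=
        probEvent_pos p hp0 (E := fun ω' => Z ω' = Z ω) hp rfl
      have h3 : 0 < probEvent p (fun ω' => X ω' = X ω ∧ Z ω' = Z ω) :=
        probEvent_pos p hp0 (E := fun ω' => X ω' = X ω ∧ Z ω' = Z ω) hp ⟨rfl, rfl⟩
      have h4 : 0 < probEvent p (fun ω' => W ω' = W ω ∧ Z ω' = Z ω) :=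
        probEvent_pos p hp0 (E := fun ω' => W ω' = W ω ∧ Z ω' = Z ω) hp ⟨rfl, rfl⟩
      rw [sub_sub, ← Real.log_mul h1.ne' h2.ne', ← Real.log_mul h3.ne' h4.ne',
        hind (X ω) (W ω) (Z ω), sub_self, mul_zero]
  have hJ2 : 0 ≤ condMI p X W (fun ω => (Y ω, Z ω)) := condMI_nonneg p hp0 hp1 X W _
  have hid : condMI p X Y (fun ω => (Z ω, W ω))
      = condMI p X Y Z - condMI p X W Z + condMI p X W (fun ω => (Y ω, Z ω)) := by
    rw [condMI_eq_sum, condMI_eq_sum, condMI_eq_sum, condMI_eq_sum,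
      ← Finset.sum_sub_distrib, ← Finset.sum_add_distrib]
    refine Finset.sum_congr rfl fun ω _ => ?_
    have L1 : probEvent p (fun ω' => (X ω', (Y ω', (Z ω', W ω'))) = (X ω, (Y ω, (Z ω, W ω))))
        = probEvent p (fun ω' => (X ω', (W ω', (Y ω', Z ω'))) = (X ω, (W ω, (Y ω, Z ω)))) :=
      probEvent_congr p fun ω' => by simp only [Prod.ext_iff]; tauto
    have L2 : probEvent p (fun ω' => (Z ω', W ω') = (Z ω, W ω))
        = probEvent p (fun ω' => (W ω', Z ω') = (W ω, Z ω)) :=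
      probEvent_congr p fun ω' => by simp only [Prod.ext_iff]; tauto
    have L3 : probEvent p (fun ω' => (X ω', (Z ω', W ω')) = (X ω, (Z ω, W ω)))
        = probEvent p (fun ω' => (X ω', (W ω', Z ω')) = (X ω, (W ω, Z ω))) :=
      probEvent_congr p fun ω' => by simp only [Prod.ext_iff]; tauto
    have L4 : probEvent p (fun ω' => (Y ω', (Z ω', W ω')) = (Y ω, (Z ω, W ω)))
        = probEvent p (fun ω' => (W ω', (Y ω', Z ω')) = (W ω, (Y ω, Z ω))) :=
      probEvent_congr p fun ω' => by simp only [Prod.ext_iff]; tauto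
    rw [L1, L2, L3, L4]
    ring
  rw [hid, hJ1]
  linarith
end
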